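/- Let $d_n = (2! \cdot 3! \cdots n!)^4 \cdot (n+1)!$. Then for all positive integers $p$ and $q$, the number $d_p \cdot d_q$ divides $2 \cdot d_{p+q-1}$. -/
import Mathlib


/-- `d n = (2! ⋯ n!)^4 * (n+1)!` -/
def d (n : ℕ) : ℕ := (∏ k ∈ Finset.Icc 2 n, Nat.factorial k) ^ 4 * Nat.factorial (n + 1)

lemma d_succ (n : ℕ) :
    d (n + 1) = d n * (Nat.factorial (n + 1) ^ 3 * Nat.factorial (n + 2)) := by
  cases n with
  | zero => decide
  | succ m =>
    unfold d
    rw [Finset.prod_Icc_succ_top (by omega : 2 ≤ m + 1 + 1)]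
    ring

theorem d_mul_d_dvd_two_mul (p q : ℕ) (hp : 0 < p) (hq : 0 < q) :
    d p * d q ∣ 2 * d (p + q - 1) := by
  induction q, hq using Nat.le_induction with
  | base =>
    have h1 : d 1 = 2 := by decide
    simp only [h1, Nat.add_sub_cancel]
    rw [mul_comm]
  | succ n hn ih =>
    have h1 : p + (n + 1) - 1 = (p + n - 1) + 1 := by omega
    rw [h1, d_succ, d_succ]
    have h2 : p + n - 1 + 1 = p + n := by omega
    have h3 : p + n - 1 + 2 = p + n + 1 := by omega
    rw [h2, h3]
    have hXY : Nat.factorial (n + 1) ^ 3 * Nat.factorial (n + 2) ∣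
        Nat.factorial (p + n) ^ 3 * Nat.factorial (p + n + 1) :=
      mul_dvd_mul
        (pow_dvd_pow_of_dvd (Nat.factorial_dvd_factorial (by omega)) 3)
        (Nat.factorial_dvd_factorial (by omega))
    simpa [mul_assoc] using mul_dvd_mul ih hXY
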